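/- Let m > 0 and define for each n ≥ 1 the threshold E₀⁽ⁿ⁾(P) = ½c(n,P)² + sqrt(m²n²+(|P|-c(n,P))²), where c(n,P) solves c = (|P|-c)/sqrt(m²n²+(|P|-c)²). Then for all P ≠ 0 and all n ≥ 1, E₀⁽ⁿ⁺¹⁾(P) > E₀⁽ⁿ⁾(P). -/
import Mathlib

/-- If `c ∈ [0,1]` satisfies the fixed-point equation `c·√(a+(p-c)²) = p - c`,
then `c` minimizes `x ↦ x²/2 + √(a+(p-x)²)`. -/
lemma nelson_min_aux (a p c x : ℝ) (ha : 0 < a) (hc0 : 0 ≤ c) (hc1 : c ≤ 1)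
    (heq : c * Real.sqrt (a + (p - c) ^ 2) = p - c) :
    c ^ 2 / 2 + Real.sqrt (a + (p - c) ^ 2) ≤
      x ^ 2 / 2 + Real.sqrt (a + (p - x) ^ 2) := by
  set S := Real.sqrt (a + (p - c) ^ 2) with hS
  set T := Real.sqrt (a + (p - x) ^ 2) with hT
  have hS2 : S ^ 2 = a + (p - c) ^ 2 := Real.sq_sqrt (by positivity)
  have hT2 : T ^ 2 = a + (p - x) ^ 2 := Real.sq_sqrt (by positivity)
  have hT0 : 0 ≤ T := Real.sqrt_nonneg _
  have h1 : (S - c * (x - c)) ^ 2 ≤ T ^ 2 := by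
    have e : (S - c * (x - c)) ^ 2 =
        S ^ 2 - 2 * (x - c) * (c * S) + c ^ 2 * (x - c) ^ 2 := by ring
    rw [e, heq, hS2, hT2]
    nlinarith [mul_nonneg (mul_nonneg (sub_nonneg.2 hc1) (by linarith : (0:ℝ) ≤ 1 + c))
      (sq_nonneg (x - c))]
  have hkey : S - c * (x - c) ≤ T := by
    calc S - c * (x - c) ≤ |S - c * (x - c)| := le_abs_self _
      _ = Real.sqrt ((S - c * (x - c)) ^ 2) := (Real.sqrt_sq_eq_abs _).symm
      _ ≤ Real.sqrt (T ^ 2) := Real.sqrt_le_sqrt h1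
      _ = T := Real.sqrt_sq hT0
  nlinarith [sq_nonneg (x - c)]

/-- The `n`-boson energy thresholds
`E₀⁽ⁿ⁾(P) = ½c(n,P)² + sqrt(m²n²+(|P|-c(n,P))²)` of the massive Nelson model,
where `c(n,P) ∈ [0,1)` solves `c = (|P|-c)/sqrt(m²n²+(|P|-c)²)`, satisfy
`E₀⁽ⁿ⁺¹⁾(P) > E₀⁽ⁿ⁾(P)` for all `P ≠ 0` and `n ≥ 1`. -/
theorem thresholds_strict_increasing
    (d : ℕ) (m : ℝ) (hm : 0 < m)
    (P : EuclideanSpace ℝ (Fin d)) (hP : P ≠ 0)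
    (c : ℕ → ℝ)
    (hc : ∀ n : ℕ, 1 ≤ n → c n ∈ Set.Ico (0 : ℝ) 1 ∧
      c n = (‖P‖ - c n) / Real.sqrt (m ^ 2 * (n : ℝ) ^ 2 + (‖P‖ - c n) ^ 2))
    (E : ℕ → ℝ)
    (hE : ∀ n : ℕ, E n =
      (c n) ^ 2 / 2 + Real.sqrt (m ^ 2 * (n : ℝ) ^ 2 + (‖P‖ - c n) ^ 2)) :
    ∀ n : ℕ, 1 ≤ n → E n < E (n + 1) := by
  intro n hn
  obtain ⟨⟨hc0, hc1⟩, heqdiv⟩ := hc n hn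
  have hn1 : (1 : ℝ) ≤ (n : ℝ) := by exact_mod_cast hn
  have ha : 0 < m ^ 2 * (n : ℝ) ^ 2 := by positivity
  have hSpos : 0 < Real.sqrt (m ^ 2 * (n : ℝ) ^ 2 + (‖P‖ - c n) ^ 2) :=
    Real.sqrt_pos.2 (by nlinarith [sq_nonneg (‖P‖ - c n)])
  have heq : c n * Real.sqrt (m ^ 2 * (n : ℝ) ^ 2 + (‖P‖ - c n) ^ 2) = ‖P‖ - c n := by
    field_simp at heqdiv
    linarith [heqdiv]
  have step1 : E n ≤ (c (n + 1)) ^ 2 / 2 +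
      Real.sqrt (m ^ 2 * (n : ℝ) ^ 2 + (‖P‖ - c (n + 1)) ^ 2) := by
    rw [hE n]
    exact nelson_min_aux _ _ _ _ ha hc0 hc1.le heq
  have step2 : Real.sqrt (m ^ 2 * (n : ℝ) ^ 2 + (‖P‖ - c (n + 1)) ^ 2) <
      Real.sqrt (m ^ 2 * ((n : ℝ) + 1) ^ 2 + (‖P‖ - c (n + 1)) ^ 2) := by
    apply Real.sqrt_lt_sqrt (by positivity)
    nlinarith
  have hEn1 : E (n + 1) = (c (n + 1)) ^ 2 / 2 +
      Real.sqrt (m ^ 2 * ((n : ℝ) + 1) ^ 2 + (‖P‖ - c (n + 1)) ^ 2) := by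
    rw [hE (n + 1)]; push_cast; ring_nf
  rw [hEn1]
  linarith
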